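/- If reduced expressions i and i' for w_0 in type A_n are related by a sequence of commutation moves (each interchanging two adjacent entries p, q with |p − q| > 1), then the set of chamber sets of CD(i) equals the set of chamber sets of CD(i'). -/

import Mathlib

/-!
Common definitions: type `A_n` combinatorics of reduced words for the longest
element, partial quivers, chamber sets, Lusztig cones, the rectangle diagrams
`D(P)` and `D(j)`, the sets `S(P)`, `S(j)`, `S(x)`, and Reineke's description
of Kashiwara's operators.
-/

noncomputable section

namespace Paper

attribute [local instance] Classical.propDecidable

/-! ### Partial quivers of type `A_n` -/

/-- Edge symbols of a partial quiver: leftward arrow, rightward arrow, undirected. -/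
inductive PQSym : Type
  | L : PQSym
  | R : PQSym
  | N : PQSym
deriving DecidableEq

/-- A partial quiver of type `A_n`: symbols on the edges `2, …, n` (numbered from the
right-hand end), with the directed edges forming a nonempty interval. -/
structure PartialQuiver (n : ℕ) : Type where
  edge : ℕ → PQSym
  undirected_outside : ∀ j : ℕ, j < 2 ∨ n < j → edge j = PQSym.N
  directed_nonempty : ∃ j : ℕ, edge j ≠ PQSym.N
  directed_interval : ∀ j j' j'' : ℕ, j ≤ j' → j' ≤ j'' →
    edge j ≠ PQSym.N → edge j'' ≠ PQSym.N → edge j' ≠ PQSym.N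

/-- A quiver: a partial quiver with no undirected edge. -/
def IsQuiver (n : ℕ) (Q : PartialQuiver n) : Prop :=
  ∀ j : ℕ, 2 ≤ j → j ≤ n → Q.edge j ≠ PQSym.N

/-- `P ≤ Q` : every directed edge of `P` carries the same symbol in `Q`. -/
def PQle (n : ℕ) (P Q : PartialQuiver n) : Prop :=
  ∀ j : ℕ, P.edge j ≠ PQSym.N → Q.edge j = P.edge j

/-- The edges `lo, lo+1, …, hi` form a component of `P` (a maximal run of equally
oriented directed edges).  Its type is `P.edge lo`, and `a(Y) = lo - 1`,
`b(Y) = hi + 1`. -/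
def IsComp (n : ℕ) (P : PartialQuiver n) (lo hi : ℕ) : Prop :=
  2 ≤ lo ∧ lo ≤ hi ∧ hi ≤ n ∧ P.edge lo ≠ PQSym.N ∧
    (∀ j : ℕ, lo ≤ j → j ≤ hi → P.edge j = P.edge lo) ∧
    P.edge (lo - 1) ≠ P.edge lo ∧ P.edge (hi + 1) ≠ P.edge lo

/-- The chamber set `l(P) ⊆ [1, n+1]` of a partial quiver:
`l₁(P) = {j : edge j is an L}`, `l₂(P) = [1, p-1]` if the rightmost directed edge is
an `R` at position `p`, `l₃(P) = [q+1, n+1]` if the leftmost directed edge is an `R`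
at position `q`. -/
def lset (n : ℕ) (P : PartialQuiver n) : Finset ℕ :=
  (Finset.Icc 1 (n + 1)).filter (fun m =>
    P.edge m = PQSym.L ∨
    (∃ p ∈ Finset.Icc 2 n, P.edge p = PQSym.R ∧
      (∀ q ∈ Finset.Icc 2 n, q < p → P.edge q = PQSym.N) ∧ m < p) ∨
    (∃ q ∈ Finset.Icc 2 n, P.edge q = PQSym.R ∧
      (∀ p' ∈ Finset.Icc 2 n, q < p' → P.edge p' = PQSym.N) ∧ q < m))

/-! ### Reduced words for the longest element, positive roots, chamber sets -/

/-- The Coxeter generator `s_i`, acting as the transposition `(i, i+1)` of `ℕ`. -/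
def sRefl (i : ℕ) : Equiv.Perm ℕ := Equiv.swap i (i + 1)

/-- The product `s_{i_1} s_{i_2} ⋯ s_{i_k}` of a word. -/
def wordProd (w : List ℕ) : Equiv.Perm ℕ := (w.map sRefl).prod

/-- `w` is a reduced expression for the longest element `w₀` of `W(A_n) = S_{n+1}`:
its letters lie in `[1,n]`, it has length `n(n+1)/2`, and its product is the
permutation `m ↦ n + 2 - m` of `[1, n+1]`. -/
def IsRedWordW0 (n : ℕ) (w : List ℕ) : Prop :=
  (∀ i ∈ w, 1 ≤ i ∧ i ≤ n) ∧ w.length = n * (n + 1) / 2 ∧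
    ∀ m : ℕ, 1 ≤ m → m ≤ n + 1 → wordProd w m = n + 2 - m

/-- The letter `i_r` of `w` (positions numbered from `1`). -/
def letterAt (w : List ℕ) (r : ℕ) : ℕ := w.getD (r - 1) 0

/-- The `r`-th positive root `α^r = s_{i_1} ⋯ s_{i_{r-1}} (α_{i_r})` determined by `w`,
recorded as the pair `(c, d)` with `c < d` for `α_{cd} = α_c + ⋯ + α_{d-1}`. -/
def rootAt (w : List ℕ) (r : ℕ) : ℕ × ℕ :=
  (min (wordProd (w.take (r - 1)) (letterAt w r))
       (wordProd (w.take (r - 1)) (letterAt w r + 1)),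
   max (wordProd (w.take (r - 1)) (letterAt w r))
       (wordProd (w.take (r - 1)) (letterAt w r + 1)))

/-- The chamber sets of the chamber diagram `CD(w)`: bounded chambers correspond to
minimal pairs `r < r'` (equal letters with no equal letter in between); the chamber
set of such a chamber is the set of strings passing below it, namely
`{(s_{i_1} ⋯ s_{i_r})(m) : i_r < m ≤ n+1}`. -/
def chamberSets (n : ℕ) (w : List ℕ) : Set (Finset ℕ) :=
  { S | ∃ r r' : ℕ, 1 ≤ r ∧ r < r' ∧ r' ≤ w.length ∧ letterAt w r' = letterAt w r ∧
      (∀ p : ℕ, r < p → p < r' → letterAt w p ≠ letterAt w r) ∧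
      S = (Finset.Icc (letterAt w r + 1) (n + 1)).image (wordProd (w.take r)) }

/-! ### The multisets `M(P)`, `M(j)` and the spanning vectors `v_P`, `v_j` -/

/-- The number `m_{cd}` of components `Y` of `P` with `α_{cd} ∈ M(Y)`, where
`M(Y) = {α_{cd} : 1 ≤ c ≤ a(Y) ≤ b(Y) ≤ d ≤ n+1}`. -/
def compCount (n : ℕ) (P : PartialQuiver n) (c d : ℕ) : ℕ :=
  ((Finset.Icc 2 n ×ˢ Finset.Icc 2 n).filter (fun lh =>
    IsComp n P lh.1 lh.2 ∧ 1 ≤ c ∧ c ≤ lh.1 - 1 ∧ lh.2 + 1 ≤ d ∧ d ≤ n + 1)).card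

/-- The multiplicity `⌈m_{cd}/2⌉` of `α_{cd}` in the multiset `M(P)`. -/
def multMP (n : ℕ) (P : PartialQuiver n) (c d : ℕ) : ℕ := (compCount n P c d + 1) / 2

/-- The spanning vector `v_P(w)`: its `r`-th entry is the multiplicity of `α^r` in `M(P)`. -/
def vP (n : ℕ) (w : List ℕ) (P : PartialQuiver n) (r : ℕ) : ℕ :=
  if 1 ≤ r ∧ r ≤ w.length then multMP n P (rootAt w r).1 (rootAt w r).2 else 0

/-- The spanning vector `v_j(w)`: its `r`-th entry is the multiplicity of `α^r` in
`M(j) = {α_{cd} : c ≤ j < j+1 ≤ d}`. -/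
def vj (n : ℕ) (w : List ℕ) (j r : ℕ) : ℕ :=
  if 1 ≤ r ∧ r ≤ w.length ∧ (rootAt w r).1 ≤ j ∧ j + 1 ≤ (rootAt w r).2 then 1 else 0

/-- The Lusztig cone `C_w ⊆ ℕ^k` (entries indexed by positions `1, …, k`). -/
def LusztigCone (n : ℕ) (w : List ℕ) : Set (ℕ → ℕ) :=
  { a | (∀ r : ℕ, r = 0 ∨ w.length < r → a r = 0) ∧
      ∀ s s' : ℕ, 1 ≤ s → s < s' → s' ≤ w.length → letterAt w s' = letterAt w s →
        (∀ p : ℕ, s < p → p < s' → letterAt w p ≠ letterAt w s) →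
        a s + a s' ≤ ∑ p ∈ (Finset.Ioo s s').filter
          (fun p => letterAt w p = letterAt w s + 1 ∨ letterAt w s = letterAt w p + 1), a p }

/-- A single commutation move: interchange adjacent letters `p, q` with `|p - q| > 1`. -/
def CommMove (w w' : List ℕ) : Prop :=
  ∃ (u v : List ℕ) (p q : ℕ), (p + 1 < q ∨ q + 1 < p) ∧
    w = u ++ p :: q :: v ∧ w' = u ++ q :: p :: v

/-! ### Compatibility of a reduced word with a quiver -/

def flipSym : PQSym → PQSym
  | PQSym.L => PQSym.R
  | PQSym.R => PQSym.L
  | PQSym.N => PQSym.N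

/-- Reverse all arrows incident to the vertex `v` (these are the edges `v` and `v+1`). -/
def reverseAt (Q : ℕ → PQSym) (v : ℕ) : ℕ → PQSym :=
  fun j => if j = v ∨ j = v + 1 then flipSym (Q j) else Q j

/-- The vertex `v ∈ [1,n]` is a sink (all incident arrows point into `v`). -/
def IsSinkF (n : ℕ) (Q : ℕ → PQSym) (v : ℕ) : Prop :=
  1 ≤ v ∧ v ≤ n ∧ (2 ≤ v → Q v = PQSym.L) ∧ (v + 1 ≤ n → Q (v + 1) = PQSym.R)

def CompatibleAux (n : ℕ) : List ℕ → (ℕ → PQSym) → Prop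
  | [], _ => True
  | i :: rest, Q => IsSinkF n Q i ∧ CompatibleAux n rest (reverseAt Q i)

/-- `w` is compatible with the quiver `Q`: `i_1` is a sink of `Q` and the rest of `w`
is compatible with the quiver obtained by reversing all arrows incident to `i_1`. -/
def Compatible (n : ℕ) (w : List ℕ) (Q : PartialQuiver n) : Prop :=
  CompatibleAux n w Q.edge

/-! ### The piecewise-linear maps `T₂`, `T₃` -/

def T2 (x : ℕ × ℕ) : ℕ × ℕ := (x.2, x.1)

def T3 (x : ℤ × ℤ × ℤ) : ℤ × ℤ × ℤ :=
  (max x.2.2 (x.2.1 - x.1), x.1 + x.2.2, min x.1 (x.2.1 - x.2.2))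

/-! ### The diagram `D(P)` -/

/-- The point `T + u·(-1,-1) + v·(1,-1)` of a rectangle with top corner `T`. -/
def rectPt (T : ℤ × ℤ) (u v : ℕ) : ℤ × ℤ :=
  (T.1 - (u : ℤ) + (v : ℤ), T.2 - (u : ℤ) - (v : ℤ))

/-- `Tc` assigns to each component `(lo,hi)` of `P` the top corner of its rectangle
`ρ(Y)` (which has `a = lo - 1` rows in direction `(-1,-1)` and `n + 2 - b = n + 1 - hi`
columns in direction `(1,-1)`), so that whenever a component of type `L` is immediately
followed (on the right, i.e. at lower edge numbers) by one of type `R` their leftmost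
corners coincide, and whenever one of type `R` is immediately followed by one of type
`L` their rightmost corners coincide. -/
def IsRealization (n : ℕ) (P : PartialQuiver n) (Tc : ℕ × ℕ → ℤ × ℤ) : Prop :=
  ∀ lo hi lo' hi' : ℕ, IsComp n P lo hi → IsComp n P lo' hi' → hi' + 1 = lo →
    (P.edge lo = PQSym.L →
      rectPt (Tc (lo, hi)) (lo - 2) 0 = rectPt (Tc (lo', hi')) (lo' - 2) 0) ∧
    (P.edge lo = PQSym.R →
      rectPt (Tc (lo, hi)) 0 (n - hi) = rectPt (Tc (lo', hi')) 0 (n - hi'))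

/-- `x` belongs to the rectangle of the component `(lo,hi)`. -/
def InRect (n : ℕ) (Tc : ℕ × ℕ → ℤ × ℤ) (lo hi : ℕ) (x : ℤ × ℤ) : Prop :=
  ∃ u v : ℕ, u ≤ lo - 2 ∧ v ≤ n - hi ∧ x = rectPt (Tc (lo, hi)) u v

/-- The set of points of the diagram `D(P)`. -/
def pointsD (n : ℕ) (P : PartialQuiver n) (Tc : ℕ × ℕ → ℤ × ℤ) : Finset (ℤ × ℤ) :=
  ((Finset.Icc 2 n ×ˢ Finset.Icc 2 n).filter (fun lh => IsComp n P lh.1 lh.2)).biUnion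
    (fun lh => (Finset.range (lh.1 - 1) ×ˢ Finset.range (n + 1 - lh.2)).image
      (fun uv => rectPt (Tc lh) uv.1 uv.2))

/-- The label of the top corner of the rectangle of `(lo,hi)`: `1` for type `L`,
`b - a = hi - lo + 2` for type `R`. -/
def baseOf (n : ℕ) (P : PartialQuiver n) (lo hi : ℕ) : ℕ :=
  if P.edge lo = PQSym.L then 1 else hi - lo + 2

/-- The point `x` of `D(P)` carries the label `m`. -/
def HasLabel (n : ℕ) (P : PartialQuiver n) (Tc : ℕ × ℕ → ℤ × ℤ) (x : ℤ × ℤ) (m : ℕ) : Prop :=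
  ∃ lo hi u v : ℕ, IsComp n P lo hi ∧ u ≤ lo - 2 ∧ v ≤ n - hi ∧
    x = rectPt (Tc (lo, hi)) u v ∧ m = baseOf n P lo hi + u + v

/-- The label of a point of `D(P)` (labels from different rectangles agree). -/
def labelD (n : ℕ) (P : PartialQuiver n) (Tc : ℕ × ℕ → ℤ × ℤ) (x : ℤ × ℤ) : ℕ :=
  sInf { m | HasLabel n P Tc x m }

/-- The multiplicity `⌈t/2⌉` of a point, `t` being the number of rectangles containing it. -/
def multD (n : ℕ) (P : PartialQuiver n) (Tc : ℕ × ℕ → ℤ × ℤ) (x : ℤ × ℤ) : ℕ :=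
  (((Finset.Icc 2 n ×ˢ Finset.Icc 2 n).filter (fun lh =>
      IsComp n P lh.1 lh.2 ∧ InRect n Tc lh.1 lh.2 x)).card + 1) / 2

/-- Diagonal rows of `D(P)` run in direction `(1,-1)`; they are the level sets of the key. -/
def keyOf (x : ℤ × ℤ) : ℤ := x.1 + x.2

def maxKey (n : ℕ) (P : PartialQuiver n) (Tc : ℕ × ℕ → ℤ × ℤ) : ℤ :=
  WithBot.unbotD 0 ((pointsD n P Tc).image keyOf).max

def minKey (n : ℕ) (P : PartialQuiver n) (Tc : ℕ × ℕ → ℤ × ℤ) : ℤ :=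
  WithTop.untopD 0 ((pointsD n P Tc).image keyOf).min

def maxX (n : ℕ) (P : PartialQuiver n) (Tc : ℕ × ℕ → ℤ × ℤ) : ℤ :=
  WithBot.unbotD 0 ((pointsD n P Tc).image Prod.fst).max

def minX (n : ℕ) (P : PartialQuiver n) (Tc : ℕ × ℕ → ℤ × ℤ) : ℤ :=
  WithTop.untopD 0 ((pointsD n P Tc).image Prod.fst).min

def keyT (Tc : ℕ × ℕ → ℤ × ℤ) (lo hi : ℕ) : ℤ := keyOf (Tc (lo, hi))

def dT (Tc : ℕ × ℕ → ℤ × ℤ) (lo hi : ℕ) : ℤ := (Tc (lo, hi)).1 - (Tc (lo, hi)).2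

/-- `c` is the key of a diagonal row of `D(P)`. -/
def IsCellRow (n : ℕ) (P : PartialQuiver n) (Tc : ℕ × ℕ → ℤ × ℤ) (c : ℤ) : Prop :=
  ∃ x ∈ pointsD n P Tc, keyOf x = c

/-- The rectangle of the component `(lo,hi)` meets the diagonal row with key `c`. -/
def CoversRow (n : ℕ) (P : PartialQuiver n) (Tc : ℕ × ℕ → ℤ × ℤ) (lo hi : ℕ) (c : ℤ) : Prop :=
  IsComp n P lo hi ∧ keyT Tc lo hi - 2 * ((lo : ℤ) - 2) ≤ c ∧ c ≤ keyT Tc lo hi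

/-- The lines in direction `(-1,-1)` bounding the rectangles which meet the diagonal
row with key `c` (recorded by their invariant `x - y`, offset by `±1` from the points). -/
def dEdges (n : ℕ) (P : PartialQuiver n) (Tc : ℕ × ℕ → ℤ × ℤ) (c : ℤ) : Finset ℤ :=
  ((Finset.Icc 2 n ×ˢ Finset.Icc 2 n).filter (fun lh => CoversRow n P Tc lh.1 lh.2 c)).biUnion
    (fun lh => {dT Tc lh.1 lh.2 - 1, dT Tc lh.1 lh.2 + 2 * ((n : ℤ) - (lh.2 : ℤ)) + 1})

/-- The number of boxes in the row of boxes through the diagonal row with key `c`. -/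
def boxCount (n : ℕ) (P : PartialQuiver n) (Tc : ℕ × ℕ → ℤ × ℤ) (c : ℤ) : ℕ :=
  (dEdges n P Tc c).card - 1

/-- `z` is (the key of) the central line `Z` of `D(P)`: it separates the diagonal rows
whose rows of boxes have box-numbers of one parity from those of the other parity. -/
def IsCentralLine (n : ℕ) (P : PartialQuiver n) (Tc : ℕ × ℕ → ℤ × ℤ) (z : ℤ) : Prop :=
  minKey n P Tc < z ∧ z < maxKey n P Tc ∧
  (∀ c : ℤ, IsCellRow n P Tc c → c ≠ z) ∧
  (∀ c c' : ℤ, IsCellRow n P Tc c → IsCellRow n P Tc c' → z < c → z < c' →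
    (Even (boxCount n P Tc c) ↔ Even (boxCount n P Tc c'))) ∧
  (∀ c c' : ℤ, IsCellRow n P Tc c → IsCellRow n P Tc c' → c < z → c' < z →
    (Even (boxCount n P Tc c) ↔ Even (boxCount n P Tc c'))) ∧
  (∀ c c' : ℤ, IsCellRow n P Tc c → IsCellRow n P Tc c' → c < z → z < c' →
    ¬ (Even (boxCount n P Tc c) ↔ Even (boxCount n P Tc c')))

/-- `x` lies in `ρ*(Y)`: the part of the rectangle of `Y = (lo,hi)` on the same side
of the central line as its labelled corner (the rightmost corner for type `L`, the
leftmost corner for type `R`). -/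
def InRhoStar (n : ℕ) (P : PartialQuiver n) (Tc : ℕ × ℕ → ℤ × ℤ) (z : ℤ)
    (lo hi : ℕ) (x : ℤ × ℤ) : Prop :=
  InRect n Tc lo hi x ∧
    (P.edge lo = PQSym.L → (z < keyOf x ↔ z < keyT Tc lo hi)) ∧
    (P.edge lo = PQSym.R → (z < keyOf x ↔ z < keyT Tc lo hi - 2 * ((lo : ℤ) - 2)))

/-- The root `α_{cd}` arises from the component `Y = (lo,hi)` and the diagonal row with
key `k`: the intersection of that row with `ρ*(Y)` consists exactly of points labelled
`c, c+1, …, d-1` in order from top-left to bottom-right. -/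
def ArisesFromY (n : ℕ) (P : PartialQuiver n) (Tc : ℕ × ℕ → ℤ × ℤ) (z : ℤ)
    (lo hi c d : ℕ) (k : ℤ) : Prop :=
  c < d ∧ ∃ p : ℤ × ℤ,
    ({ x : ℤ × ℤ | keyOf x = k ∧ InRhoStar n P Tc z lo hi x } =
      { y : ℤ × ℤ | ∃ t : ℕ, t ≤ d - c - 1 ∧ y = (p.1 + (t : ℤ), p.2 - (t : ℤ)) }) ∧
    ∀ t : ℕ, t ≤ d - c - 1 → HasLabel n P Tc (p.1 + (t : ℤ), p.2 - (t : ℤ)) (c + t)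

/-- The root `α_{cd}` arises from the diagonal row with key `k` (via some component). -/
def ArisesFrom (n : ℕ) (P : PartialQuiver n) (Tc : ℕ × ℕ → ℤ × ℤ) (z : ℤ)
    (c d : ℕ) (k : ℤ) : Prop :=
  ∃ lo hi : ℕ, IsComp n P lo hi ∧ ArisesFromY n P Tc z lo hi c d k

/-- The set `S(Y)` of positive roots of a component. -/
def SY (n : ℕ) (P : PartialQuiver n) (Tc : ℕ × ℕ → ℤ × ℤ) (z : ℤ) (lo hi : ℕ) :
    Set (ℕ × ℕ) :=
  { cd | ∃ k : ℤ, ArisesFromY n P Tc z lo hi cd.1 cd.2 k }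

/-- The set `S(P)` of positive roots. -/
def SP (n : ℕ) (P : PartialQuiver n) (Tc : ℕ × ℕ → ℤ × ℤ) (z : ℤ) : Set (ℕ × ℕ) :=
  { cd | ∃ k : ℤ, ArisesFrom n P Tc z cd.1 cd.2 k }

/-- `S₁(x)` for a point `x` of `D(P)` with label `m`: roots of `S(P)` arising from the
rows strictly above the row of `x`, together with those arising from the row of `x`
of the form `α_{cd}` with `c ≥ m`. -/
def S1x (n : ℕ) (P : PartialQuiver n) (Tc : ℕ × ℕ → ℤ × ℤ) (z : ℤ)
    (x : ℤ × ℤ) (m : ℕ) : Set (ℕ × ℕ) :=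
  { cd | (∃ k : ℤ, keyOf x < k ∧ ArisesFrom n P Tc z cd.1 cd.2 k) ∨
      (ArisesFrom n P Tc z cd.1 cd.2 (keyOf x) ∧ m ≤ cd.1) }

/-- `S₂(x)`: the roots `α_{md}` cut off from roots `α_{c'd} ∈ S(P)` arising from the
row of `x` with `c' < m`. -/
def S2x (n : ℕ) (P : PartialQuiver n) (Tc : ℕ × ℕ → ℤ × ℤ) (z : ℤ)
    (x : ℤ × ℤ) (m : ℕ) : Set (ℕ × ℕ) :=
  { cd | cd.1 = m ∧ m < cd.2 ∧ ∃ c' : ℕ, c' < m ∧ ArisesFrom n P Tc z c' cd.2 (keyOf x) }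

/-- `S(x) = S₁(x) ∪ S₂(x)`. -/
def Sx (n : ℕ) (P : PartialQuiver n) (Tc : ℕ × ℕ → ℤ × ℤ) (z : ℤ)
    (x : ℤ × ℤ) (m : ℕ) : Set (ℕ × ℕ) :=
  S1x n P Tc z x m ∪ S2x n P Tc z x m

/-! ### Reading off the diagram: the sequence `μ(P)` -/

/-- The labels (with multiplicity) of the points of the diagonal row of `D(P)` with key
`k` having `x`-coordinate `≥ xlo`, read from top-left to bottom-right. -/
def rowListP (n : ℕ) (P : PartialQuiver n) (Tc : ℕ × ℕ → ℤ × ℤ) (k : ℤ) (xlo : ℤ) :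
    List ℕ :=
  ((List.range ((maxX n P Tc - minX n P Tc).toNat + 1)).map
      (fun t => minX n P Tc + (t : ℤ))).flatMap
    (fun xx => if xlo ≤ xx ∧ (xx, k - xx) ∈ pointsD n P Tc then
        List.replicate (multD n P Tc (xx, k - xx)) (labelD n P Tc (xx, k - xx)) else [])

/-- The sequence `μ(P)`: the diagonal rows read from the last (bottom left) to the
first (top right), each row from top-left to bottom-right, labels repeated according
to multiplicity. -/
def muP (n : ℕ) (P : PartialQuiver n) (Tc : ℕ × ℕ → ℤ × ℤ) : List ℕ :=
  ((List.range ((maxKey n P Tc - minKey n P Tc).toNat + 1)).map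
      (fun t => minKey n P Tc + (t : ℤ))).flatMap
    (fun k => rowListP n P Tc k (minX n P Tc))

/-- The list of operator indices applied (in order of application) to reach the point
`x`: the rows `1, …, a-1` in turn, each read from its bottom-right end to its top-left
end, then the row of `x` from its bottom-right end up to and including `x`. -/
def opsTo (n : ℕ) (P : PartialQuiver n) (Tc : ℕ × ℕ → ℤ × ℤ) (x : ℤ × ℤ) : List ℕ :=
  (((List.range (((maxKey n P Tc - keyOf x) / 2).toNat)).map
      (fun t => maxKey n P Tc - 2 * (t : ℤ))).flatMap
    (fun k => (rowListP n P Tc k (minX n P Tc)).reverse)) ++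
  (rowListP n P Tc (keyOf x) x.1).reverse

/-- The word whose letters are, for `r = 1, …, k` in order, the letter `i_r` of `w`
repeated `(v_P)_r` times. -/
def FwordP (n : ℕ) (w : List ℕ) (P : PartialQuiver n) : List ℕ :=
  (List.range w.length).flatMap (fun r0 => List.replicate (vP n w P (r0 + 1)) (letterAt w (r0 + 1)))

/-- The word whose letters are, for `r = 1, …, k` in order, the letter `i_r` of `w`
repeated `(v_j)_r` times. -/
def FwordJ (n : ℕ) (w : List ℕ) (j : ℕ) : List ℕ :=
  (List.range w.length).flatMap (fun r0 => List.replicate (vj n w j (r0 + 1)) (letterAt w (r0 + 1)))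

/-! ### The diagram `D(j)`, `j ∈ [1,n]` : a single type `L` rectangle with
`a = j`, `b = j + 1`. -/

def InRectJ (n j : ℕ) (T0 : ℤ × ℤ) (x : ℤ × ℤ) : Prop :=
  ∃ u v : ℕ, u < j ∧ v < n + 1 - j ∧ x = rectPt T0 u v

def pointsDJ (n j : ℕ) (T0 : ℤ × ℤ) : Finset (ℤ × ℤ) :=
  (Finset.range j ×ˢ Finset.range (n + 1 - j)).image (fun uv => rectPt T0 uv.1 uv.2)

def HasLabelJ (n j : ℕ) (T0 : ℤ × ℤ) (x : ℤ × ℤ) (m : ℕ) : Prop :=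
  ∃ u v : ℕ, u < j ∧ v < n + 1 - j ∧ x = rectPt T0 u v ∧ m = 1 + u + v

def labelDJ (n j : ℕ) (T0 : ℤ × ℤ) (x : ℤ × ℤ) : ℕ :=
  sInf { m | HasLabelJ n j T0 x m }

def maxKeyJ (n j : ℕ) (T0 : ℤ × ℤ) : ℤ := WithBot.unbotD 0 ((pointsDJ n j T0).image keyOf).max
def minKeyJ (n j : ℕ) (T0 : ℤ × ℤ) : ℤ := WithTop.untopD 0 ((pointsDJ n j T0).image keyOf).min
def maxXJ (n j : ℕ) (T0 : ℤ × ℤ) : ℤ := WithBot.unbotD 0 ((pointsDJ n j T0).image Prod.fst).max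
def minXJ (n j : ℕ) (T0 : ℤ × ℤ) : ℤ := WithTop.untopD 0 ((pointsDJ n j T0).image Prod.fst).min

/-- `α_{cd}` arises from the diagonal row of `D(j)` with key `k`: that row consists
exactly of points labelled `c, …, d-1` in order. -/
def ArisesJ (n j : ℕ) (T0 : ℤ × ℤ) (c d : ℕ) (k : ℤ) : Prop :=
  c < d ∧ ∃ p : ℤ × ℤ,
    ({ x : ℤ × ℤ | keyOf x = k ∧ InRectJ n j T0 x } =
      { y : ℤ × ℤ | ∃ t : ℕ, t ≤ d - c - 1 ∧ y = (p.1 + (t : ℤ), p.2 - (t : ℤ)) }) ∧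
    ∀ t : ℕ, t ≤ d - c - 1 → HasLabelJ n j T0 (p.1 + (t : ℤ), p.2 - (t : ℤ)) (c + t)

def SJ (n j : ℕ) (T0 : ℤ × ℤ) : Set (ℕ × ℕ) :=
  { cd | ∃ k : ℤ, ArisesJ n j T0 cd.1 cd.2 k }

def S1xJ (n j : ℕ) (T0 : ℤ × ℤ) (x : ℤ × ℤ) (m : ℕ) : Set (ℕ × ℕ) :=
  { cd | (∃ k : ℤ, keyOf x < k ∧ ArisesJ n j T0 cd.1 cd.2 k) ∨
      (ArisesJ n j T0 cd.1 cd.2 (keyOf x) ∧ m ≤ cd.1) }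

def S2xJ (n j : ℕ) (T0 : ℤ × ℤ) (x : ℤ × ℤ) (m : ℕ) : Set (ℕ × ℕ) :=
  { cd | cd.1 = m ∧ m < cd.2 ∧ ∃ c' : ℕ, c' < m ∧ ArisesJ n j T0 c' cd.2 (keyOf x) }

def SxJ (n j : ℕ) (T0 : ℤ × ℤ) (x : ℤ × ℤ) (m : ℕ) : Set (ℕ × ℕ) :=
  S1xJ n j T0 x m ∪ S2xJ n j T0 x m

/-- The sequence `μ(j)`: rows of `D(j)` from bottom-left to top-right, each row from
top-left to bottom-right (all multiplicities are `1`). -/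
def muJ (n j : ℕ) : List ℕ :=
  (List.range j).flatMap (fun t => (List.range (n + 1 - j)).map (fun v => 1 + (j - 1 - t) + v))

def rowListJ (n j : ℕ) (T0 : ℤ × ℤ) (k : ℤ) (xlo : ℤ) : List ℕ :=
  ((List.range ((maxXJ n j T0 - minXJ n j T0).toNat + 1)).map
      (fun t => minXJ n j T0 + (t : ℤ))).flatMap
    (fun xx => if xlo ≤ xx ∧ (xx, k - xx) ∈ pointsDJ n j T0 then
        [labelDJ n j T0 (xx, k - xx)] else [])

def opsToJ (n j : ℕ) (T0 : ℤ × ℤ) (x : ℤ × ℤ) : List ℕ :=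
  (((List.range (((maxKeyJ n j T0 - keyOf x) / 2).toNat)).map
      (fun t => maxKeyJ n j T0 - 2 * (t : ℤ))).flatMap
    (fun k => (rowListJ n j T0 k (minXJ n j T0)).reverse)) ++
  (rowListJ n j T0 (keyOf x) x.1).reverse

/-! ### Reineke's description of the Kashiwara operators -/

/-- `f_{ij} = Σ_{l=j}^{n+1} v_{il} - Σ_{l=j+1}^{n+1} v_{i+1,l}`. -/
def fRein (n : ℕ) (v : ℕ × ℕ → ℕ) (i j : ℕ) : ℤ :=
  (∑ l ∈ Finset.Icc j (n + 1), (v (i, l) : ℤ)) -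
    ∑ l ∈ Finset.Icc (j + 1) (n + 1), (v (i + 1, l) : ℤ)

/-- The minimal `j ∈ (i, n+1]` at which `f_{ij}` is maximal. -/
def j0R (n : ℕ) (v : ℕ × ℕ → ℕ) (i : ℕ) : ℕ :=
  sInf { j : ℕ | i + 1 ≤ j ∧ j ≤ n + 1 ∧
    ∀ j' : ℕ, i + 1 ≤ j' → j' ≤ n + 1 → fRein n v i j' ≤ fRein n v i j }

/-- The Reineke operator `F̃_i`: increase `v_{i,j₀}` by one and (if `j₀ > i + 1`)
decrease `v_{i+1,j₀}` by one. -/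
def FRein (n i : ℕ) (v : ℕ × ℕ → ℕ) : ℕ × ℕ → ℕ := fun cd =>
  if cd = (i, j0R n v i) then v cd + 1
  else if cd = (i + 1, j0R n v i) ∧ i + 1 < j0R n v i then v cd - 1
  else v cd

/-- The `0/1` indicator vector of a set of positive roots. -/
def indVec (S : Set (ℕ × ℕ)) : ℕ × ℕ → ℕ := fun cd => if cd ∈ S then 1 else 0



lemma sRefl_comm {p q : ℕ} (h : p + 1 < q ∨ q + 1 < p) :
    sRefl p * sRefl q = sRefl q * sRefl p := by
  apply Equiv.ext; intro x
  simp only [sRefl, Equiv.Perm.mul_apply, Equiv.swap_apply_def]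
  split_ifs <;> omega

lemma image_sRefl_Icc {n p q : ℕ} (hqn : q ≤ n)
    (h : p + 1 < q ∨ q + 1 < p) :
    (Finset.Icc (p+1) (n+1)).image (sRefl q) = Finset.Icc (p+1) (n+1) := by
  apply Finset.eq_of_subset_of_card_le
  · intro x hx
    simp only [Finset.mem_image, Finset.mem_Icc] at hx ⊢
    obtain ⟨m, hm, rfl⟩ := hx
    simp only [sRefl, Equiv.swap_apply_def]
    split_ifs <;> omega
  · exact le_of_eq (Finset.card_image_of_injective _ (Equiv.injective _)).symm

lemma wordProd_append (l1 l2 : List ℕ) :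
    wordProd (l1 ++ l2) = wordProd l1 * wordProd l2 := by
  simp [wordProd]

lemma wordProd_cons (a : ℕ) (l : List ℕ) : wordProd (a :: l) = sRefl a * wordProd l := by
  simp [wordProd]

lemma wordProd_single (a : ℕ) : wordProd [a] = sRefl a := by
  simp [wordProd]

lemma wordProd_mid_swap {p q : ℕ} (h : p + 1 < q ∨ q + 1 < p) (u l : List ℕ) :
    wordProd (u ++ p :: q :: l) = wordProd (u ++ q :: p :: l) := by
  rw [wordProd_append, wordProd_append, wordProd_cons, wordProd_cons,
    wordProd_cons, wordProd_cons, ← mul_assoc, ← mul_assoc, ← mul_assoc, ← mul_assoc,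
    mul_assoc (wordProd u), mul_assoc (wordProd u), sRefl_comm h, mul_assoc, mul_assoc, mul_assoc]

lemma getD_split (u : List ℕ) (a b : ℕ) (v : List ℕ) (i : ℕ) :
    (u ++ a :: b :: v).getD i 0 =
      if i < u.length then u.getD i 0
      else if i = u.length then a
      else if i = u.length + 1 then b
      else v.getD (i - u.length - 2) 0 := by
  split_ifs with h1 h2 h3
  · exact List.getD_append _ _ _ _ h1
  · rw [List.getD_append_right _ _ _ _ (le_of_not_gt h1), h2]
    simp
  · rw [List.getD_append_right _ _ _ _ (le_of_not_gt h1)]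
    have : i - u.length = 1 := by omega
    rw [this]; simp
  · rw [List.getD_append_right _ _ _ _ (le_of_not_gt h1)]
    have : i - u.length = (i - u.length - 2) + 2 := by omega
    rw [this]; simp

lemma chamberSets_subset_of_comm (n : ℕ) {w w' : List ℕ}
    (h : CommMove w w') (hw : ∀ i ∈ w, 1 ≤ i ∧ i ≤ n) :
    chamberSets n w ⊆ chamberSets n w' := by
  obtain ⟨u, v, p, q, hpq, rfl, rfl⟩ := h
  have hp := hw p (by simp)
  have hq := hw q (by simp)
  set L := u.length with hL
  have hlen : (u ++ q :: p :: v).length = L + 2 + v.length := by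
    simp only [List.length_append, List.length_cons, hL]; omega
  have hlen' : (u ++ p :: q :: v).length = L + 2 + v.length := by
    simp only [List.length_append, List.length_cons, hL]; omega
  -- letter facts
  have lwP : letterAt (u ++ p :: q :: v) (L+1) = p := by
    rw [letterAt, show L + 1 - 1 = L from rfl, getD_split]
    simp [hL]
  have lwQ : letterAt (u ++ p :: q :: v) (L+2) = q := by
    rw [letterAt, show L + 2 - 1 = L + 1 from rfl, getD_split]
    simp [hL]
  have lw'Q : letterAt (u ++ q :: p :: v) (L+1) = q := by
    rw [letterAt, show L + 1 - 1 = L from rfl, getD_split]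
    simp [hL]
  have lw'P : letterAt (u ++ q :: p :: v) (L+2) = p := by
    rw [letterAt, show L + 2 - 1 = L + 1 from rfl, getD_split]
    simp [hL]
  have lout : ∀ s, 1 ≤ s → s ≠ L+1 → s ≠ L+2 →
      letterAt (u ++ q :: p :: v) s = letterAt (u ++ p :: q :: v) s := by
    intro s h1 h2 h3
    rw [letterAt, letterAt, getD_split, getD_split]
    have h4 : s - 1 ≠ L := by omega
    have h5 : s - 1 ≠ L + 1 := by omega
    rw [← hL]
    simp [h4, h5]
  -- take facts
  have tk_le : ∀ s, s ≤ L → (u ++ q::p::v).take s = (u ++ p::q::v).take s := by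
    intro s hs
    rw [List.take_append_of_le_length hs, List.take_append_of_le_length hs]
  have tkL1 : (u ++ p::q::v).take (L+1) = u ++ [p] := by
    rw [hL, List.take_append]; simp
  have tkL2 : (u ++ p::q::v).take (L+2) = u ++ [p, q] := by
    rw [hL, List.take_append]; simp
  have tkL1' : (u ++ q::p::v).take (L+1) = u ++ [q] := by
    rw [hL, List.take_append]; simp
  have tkL2' : (u ++ q::p::v).take (L+2) = u ++ [q, p] := by
    rw [hL, List.take_append]; simp
  have tk_ge : ∀ s, L + 2 ≤ s →
      wordProd ((u ++ q::p::v).take s) = wordProd ((u ++ p::q::v).take s) := by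
    intro s hs
    obtain ⟨k, rfl⟩ : ∃ k, s = L + (k + 2) := ⟨s - L - 2, by omega⟩
    rw [hL, List.take_length_add_append, List.take_length_add_append]
    simp only [List.take_succ_cons]
    exact (wordProd_mid_swap hpq u _).symm
  rintro S ⟨r, r', hr1, hrr, hr'len, heq, hmin, hS⟩
  rw [hlen'] at hr'len
  have hne : ¬ (r = L + 1 ∧ r' = L + 2) := by
    rintro ⟨rfl, rfl⟩
    rw [lwQ, lwP] at heq
    omega
  set σ : ℕ → ℕ := fun s => if s = L + 1 then L + 2 else if s = L + 2 then L + 1 else s with hσ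
  have hσcases : ∀ s, (s = L+1 ∧ σ s = L+2) ∨ (s = L+2 ∧ σ s = L+1) ∨
      (s ≠ L+1 ∧ s ≠ L+2 ∧ σ s = s) := by
    intro s; simp only [hσ]; split_ifs with h1 h2 <;> omega
  have hσletter : ∀ s, 1 ≤ s → letterAt (u ++ q::p::v) (σ s) = letterAt (u ++ p::q::v) s := by
    intro s hs
    rcases hσcases s with ⟨h1, h2⟩ | ⟨h1, h2⟩ | ⟨h1, h2, h3⟩
    · rw [h1, h2] at *; rw [lw'P, lwP]
    · rw [h1, h2] at *; rw [lw'Q, lwQ]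
    · rw [h3]; exact lout s hs h1 h2
  refine ⟨σ r, σ r', ?_, ?_, ?_, ?_, ?_, ?_⟩
  · rcases hσcases r with ⟨h1, h2⟩ | ⟨h1, h2⟩ | ⟨h1, h2, h3⟩ <;> omega
  · rcases hσcases r with ⟨h1, h2⟩ | ⟨h1, h2⟩ | ⟨h1, h2, h3⟩ <;>
      rcases hσcases r' with ⟨h1', h2'⟩ | ⟨h1', h2'⟩ | ⟨h1', h2', h3'⟩ <;> omega
  · rw [hlen]
    rcases hσcases r' with ⟨h1', h2'⟩ | ⟨h1', h2'⟩ | ⟨h1', h2', h3'⟩ <;> omega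
  · rw [hσletter r hr1, hσletter r' (by omega)]; exact heq
  · intro m hm1 hm2
    rw [hσletter r hr1]
    have hm0 : 1 ≤ m := by
      rcases hσcases r with ⟨h1, h2⟩ | ⟨h1, h2⟩ | ⟨h1, h2, h3⟩ <;> omega
    by_cases hmL1 : m = L + 1
    · subst hmL1
      rw [lw'Q]
      by_cases hr'L1 : r' = L + 1
      · rw [← heq, hr'L1, lwP]; omega
      · intro hcon
        refine hmin (L+2) ?_ ?_ (lwQ.trans hcon)
        · rcases hσcases r with ⟨h1, h2⟩ | ⟨h1, h2⟩ | ⟨h1, h2, h3⟩ <;> omega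
        · rcases hσcases r' with ⟨h1', h2'⟩ | ⟨h1', h2'⟩ | ⟨h1', h2', h3'⟩ <;> omega
    · by_cases hmL2 : m = L + 2
      · subst hmL2
        rw [lw'P]
        by_cases hrL2 : r = L + 2
        · rw [hrL2, lwQ]; omega
        · intro hcon
          refine hmin (L+1) ?_ ?_ (lwP.trans hcon)
          · rcases hσcases r with ⟨h1, h2⟩ | ⟨h1, h2⟩ | ⟨h1, h2, h3⟩ <;> omega
          · rcases hσcases r' with ⟨h1', h2'⟩ | ⟨h1', h2'⟩ | ⟨h1', h2', h3'⟩ <;> omega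
      · rw [lout m hm0 hmL1 hmL2]
        refine hmin m ?_ ?_
        · rcases hσcases r with ⟨h1, h2⟩ | ⟨h1, h2⟩ | ⟨h1, h2, h3⟩ <;> omega
        · rcases hσcases r' with ⟨h1', h2'⟩ | ⟨h1', h2'⟩ | ⟨h1', h2', h3'⟩ <;> omega
  · rw [hσletter r hr1, hS]
    by_cases hc1 : r ≤ L
    · have hσr : σ r = r := by
        rcases hσcases r with ⟨h1, h2⟩ | ⟨h1, h2⟩ | ⟨h1, h2, h3⟩ <;> omega
      rw [hσr, tk_le r hc1]
    · by_cases hc2 : r = L + 1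
      · have hσr : σ r = L + 2 := by
          rcases hσcases r with ⟨h1, h2⟩ | ⟨h1, h2⟩ | ⟨h1, h2, h3⟩ <;> omega
        rw [hσr, hc2, lwP, tkL1, tkL2', ← wordProd_mid_swap hpq u []]
        have e3 : wordProd (u ++ [p, q]) = wordProd (u ++ [p]) * sRefl q := by
          rw [show u ++ [p, q] = (u ++ [p]) ++ [q] by simp, wordProd_append, wordProd_single]
        rw [e3, Equiv.Perm.coe_mul, ← Finset.image_image, image_sRefl_Icc hq.2 hpq]
      · by_cases hc3 : r = L + 2
        · have hσr : σ r = L + 1 := by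
            rcases hσcases r with ⟨h1, h2⟩ | ⟨h1, h2⟩ | ⟨h1, h2, h3⟩ <;> omega
          rw [hσr, hc3, lwQ, tkL2, tkL1', wordProd_mid_swap hpq u []]
          have e4 : wordProd (u ++ [q, p]) = wordProd (u ++ [q]) * sRefl p := by
            rw [show u ++ [q, p] = (u ++ [q]) ++ [p] by simp, wordProd_append, wordProd_single]
          rw [e4, Equiv.Perm.coe_mul, ← Finset.image_image, image_sRefl_Icc hp.2 hpq.symm]
        · have hσr : σ r = r := by
            rcases hσcases r with ⟨h1, h2⟩ | ⟨h1, h2⟩ | ⟨h1, h2, h3⟩ <;> omega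
          rw [hσr, tk_ge r (by omega)]


lemma commMove_symm {w w' : List ℕ} (h : CommMove w w') : CommMove w' w := by
  obtain ⟨u, v, p, q, hpq, h1, h2⟩ := h
  exact ⟨u, v, q, p, hpq.symm, h2, h1⟩

lemma mem_of_commMove {w w' : List ℕ} (h : CommMove w w') {i : ℕ} (hi : i ∈ w') : i ∈ w := by
  obtain ⟨u, v, p, q, hpq, rfl, rfl⟩ := h
  simp only [List.mem_append, List.mem_cons] at hi ⊢
  tauto

lemma chamberSets_eq_of_comm (n : ℕ) {w w' : List ℕ}
    (h : CommMove w w') (hw : ∀ i ∈ w, 1 ≤ i ∧ i ≤ n) :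
    chamberSets n w = chamberSets n w' := by
  have hw' : ∀ i ∈ w', 1 ≤ i ∧ i ≤ n := fun i hi => hw i (mem_of_commMove h hi)
  exact subset_antisymm (chamberSets_subset_of_comm n h hw)
    (chamberSets_subset_of_comm n (commMove_symm h) hw')


/-- reduced expressions for `w₀` related by commutation moves have the
same set of chamber sets. -/
theorem stmt7 (n : ℕ) (hn : 1 ≤ n) (w w' : List ℕ)
    (hred : IsRedWordW0 n w) (hred' : IsRedWordW0 n w')
    (h : Relation.ReflTransGen CommMove w w') :
    chamberSets n w = chamberSets n w' := by
  have key : ∀ b, Relation.ReflTransGen CommMove w b →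
      (∀ i ∈ b, 1 ≤ i ∧ i ≤ n) ∧ chamberSets n w = chamberSets n b := by
    intro b hb
    induction hb with
    | refl => exact ⟨hred.1, rfl⟩
    | tail h1 h2 ih =>
      refine ⟨fun i hi => ih.1 i (mem_of_commMove h2 hi), ?_⟩
      exact ih.2.trans (chamberSets_eq_of_comm n h2 ih.1)
  exact (key w' h).2

end Paper
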